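/- arXiv:math/0509174 — 4 statements merged into one kernel-verified Lean document; each statement's English description precedes it below -/
import Mathlib

section
/- If u ≤ w in the right weak Bruhat order on S_n, then for every segment [i,j] ⊆ [n], the standardization of the restricted subword u_{[i,j]} is ≤ the standardization of w_{[i,j]} in the right weak Bruhat order on S_{j-i+1}. -/
/-- `u` is the one-line word of a permutation of `{1, …, n}`. -/
def IsPermWord (n : ℕ) (u : List ℕ) : Prop := u.Perm (List.range' 1 n)

/-- The left inversion set of a word `u`:
pairs `(i, j)` of letters of `u` with `i < j` such that `j` occurs before `i` in `u`
(i.e. `u⁻¹(i) > u⁻¹(j)`). -/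
def InvW (u : List ℕ) : Set (ℕ × ℕ) :=
  {p | p.1 < p.2 ∧ p.1 ∈ u ∧ p.2 ∈ u ∧ u.idxOf p.2 < u.idxOf p.1}

/-- The left descent set of a word: letters `i` such that `i + 1` occurs before `i`. -/
def DesLW (u : List ℕ) : Set ℕ :=
  {i | i ∈ u ∧ i + 1 ∈ u ∧ u.idxOf (i + 1) < u.idxOf i}

/-- The covering relation of the right weak Bruhat order on one-line words:
`w = u · sᵢ` where the letters in positions `i, i+1` of `u` are increasing. -/
def WeakCovW (u w : List ℕ) : Prop :=
  ∃ (l₁ l₂ : List ℕ) (x y : ℕ), x < y ∧ u = l₁ ++ x :: y :: l₂ ∧ w = l₁ ++ y :: x :: l₂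

/-- Standardization of the subword of `u` on the letters in the segment `[i, j]`:
keep the letters lying in `[i, j]` and subtract `i - 1` from each. -/
def stW (u : List ℕ) (i j : ℕ) : List ℕ :=
  (u.filter (fun v => decide (i ≤ v ∧ v ≤ j))).map (fun v => v - (i - 1))


/-!
Since a letter keeps its first occurrence when a word is filtered by a predicate it satisfies,
filtering preserves the relative order of the surviving letters, and relabelling the letters by a
strictly monotone map changes neither positions nor comparisons. Hence the inversions of
`st(u_{[i,j]})` are exactly the inversions of `u` with both letters in `[i, j]`, shifted down by
`i - 1`, and this description is monotone in the inversion set of `u`.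
-/

namespace List

variable {α β : Type*} [DecidableEq α] [DecidableEq β]

theorem idxOf_filter_lt_idxOf_filter_iff {p : α → Bool} {x y : α} (hx : p x) (hy : p y)
    (l : List α) : (l.filter p).idxOf x < (l.filter p).idxOf y ↔ l.idxOf x < l.idxOf y := by
  induction l with
  | nil => simp
  | cons a t ih =>
    by_cases hpa : p a
    · rw [filter_cons_of_pos hpa]
      rcases eq_or_ne a x with rfl | hax <;> rcases eq_or_ne a y with rfl | hay <;>
        simp [*]
    · have hax : a ≠ x := fun h => hpa (h ▸ hx)
      have hay : a ≠ y := fun h => hpa (h ▸ hy)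
      simp [filter_cons_of_neg hpa, hax, hay, ih]

theorem idxOf_map_of_injOn {f : α → β} {x : α} {l : List α}
    (hf : ∀ a ∈ l, f a = f x → a = x) : (l.map f).idxOf (f x) = l.idxOf x := by
  induction l with
  | nil => simp
  | cons a t ih =>
    have ih' := ih fun b hb => hf b (mem_cons_of_mem a hb)
    by_cases hax : a = x
    · simp [hax]
    · have hfax : f a ≠ f x := fun h => hax (hf a mem_cons_self h)
      simp [hax, hfax, ih']

end List

theorem invW_filter (p : ℕ → Bool) (l : List ℕ) :
    InvW (l.filter p) = InvW l ∩ {q | p q.1 ∧ p q.2} := by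
  ext ⟨a, b⟩
  simp only [InvW, Set.mem_inter_iff, Set.mem_ofPred_eq, List.mem_filter]
  constructor
  · rintro ⟨hab, ⟨ha, hpa⟩, ⟨hb, hpb⟩, hidx⟩
    exact ⟨⟨hab, ha, hb, (List.idxOf_filter_lt_idxOf_filter_iff hpb hpa l).1 hidx⟩, hpa, hpb⟩
  · rintro ⟨⟨hab, ha, hb, hidx⟩, hpa, hpb⟩
    exact ⟨hab, ⟨ha, hpa⟩, ⟨hb, hpb⟩, (List.idxOf_filter_lt_idxOf_filter_iff hpb hpa l).2 hidx⟩

theorem invW_map_of_strictMonoOn {f : ℕ → ℕ} {s : Set ℕ} (hf : StrictMonoOn f s) {l : List ℕ}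
    (hl : ∀ x ∈ l, x ∈ s) : InvW (l.map f) = Prod.map f f '' InvW l := by
  have hidx : ∀ x ∈ l, (l.map f).idxOf (f x) = l.idxOf x := fun x hx =>
    List.idxOf_map_of_injOn fun a ha hfa => hf.injOn (hl a ha) (hl x hx) hfa
  ext ⟨c, d⟩
  constructor
  · rintro ⟨hcd, hc, hd, hdc⟩
    obtain ⟨a, ha, rfl⟩ := List.mem_map.1 hc
    obtain ⟨b, hb, rfl⟩ := List.mem_map.1 hd
    rw [hidx a ha, hidx b hb] at hdc
    exact ⟨(a, b), ⟨(hf.lt_iff_lt (hl a ha) (hl b hb)).1 hcd, ha, hb, hdc⟩, rfl⟩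
  · rintro ⟨⟨a, b⟩, ⟨hab, ha, hb, hba⟩, hcd⟩
    obtain ⟨rfl, rfl⟩ := Prod.mk.inj hcd
    refine ⟨hf (hl a ha) (hl b hb) hab, List.mem_map_of_mem ha, List.mem_map_of_mem hb, ?_⟩
    dsimp only at hba ⊢
    rwa [hidx a ha, hidx b hb]

theorem invW_stW (u : List ℕ) (i j : ℕ) :
    InvW (stW u i j) = Prod.map (· - (i - 1)) (· - (i - 1)) ''
      (InvW u ∩ {q | (i ≤ q.1 ∧ q.1 ≤ j) ∧ (i ≤ q.2 ∧ q.2 ≤ j)}) := by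
  have hmono : StrictMonoOn (· - (i - 1)) (Set.Ici i) := fun a ha b hb hab => by
    simp only [Set.mem_Ici] at ha hb
    show a - (i - 1) < b - (i - 1)
    omega
  rw [stW, invW_map_of_strictMonoOn hmono, invW_filter]
  · simp only [decide_eq_true_eq]
  · intro x hx
    exact (decide_eq_true_iff.1 (List.mem_filter.1 hx).2).1

theorem weak_order_restricts_to_segments_general (u w : List ℕ) (i j : ℕ) (huw : InvW u ⊆ InvW w) :
    InvW (stW u i j) ⊆ InvW (stW w i j) := by
  rw [invW_stW, invW_stW]
  exact Set.image_mono (Set.inter_subset_inter_left _ huw)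

/-- If `u ≤ w` in the right weak Bruhat order on `Sₙ` (characterized by
containment of left inversion sets), then for every segment `[i, j] ⊆ [n]`,
`st(u_{[i,j]}) ≤ st(w_{[i,j]})` in the right weak Bruhat order on `S_{j-i+1}`. -/
theorem weak_order_restricts_to_segments (n : ℕ) (u w : List ℕ)
    (hu : IsPermWord n u) (hw : IsPermWord n w)
    (i j : ℕ) (hi : 1 ≤ i) (hij : i ≤ j) (hj : j ≤ n)
    (huw : InvW u ⊆ InvW w) :
    InvW (stW u i j) ⊆ InvW (stW w i j) :=
  weak_order_restricts_to_segments_general u w i j huw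
end

section
/- For every subset D ⊆ [n−1], the descent class Des_L⁻¹(D) = {σ ∈ S_n : Des_L(σ) = D} is an interval in the right weak Bruhat order on S_n; that is, it has a minimum element m and a maximum element M, and it equals {σ : m ≤ σ ≤ M} in the weak order. -/
namespace List

variable {α β : Type*} [BEq α] [LawfulBEq α] [LinearOrder β] {f : α → β} {l : List α}
  {x y : α}

theorem idxOf_lt_idxOf_iff_of_pairwise (hl : l.Pairwise (fun a b => f a < f b))
    (hx : x ∈ l) (hy : y ∈ l) : l.idxOf x < l.idxOf y ↔ f x < f y := by
  have forward : ∀ a ∈ l, ∀ b ∈ l, l.idxOf a < l.idxOf b → f a < f b := by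
    intro a ha b hb hab
    have := pairwise_iff_getElem.1 hl _ _ (idxOf_lt_length_iff.2 ha) (idxOf_lt_length_iff.2 hb) hab
    rwa [getElem_idxOf, getElem_idxOf] at this
  refine ⟨forward x hx y hy, fun hf => ?_⟩
  rcases lt_trichotomy (l.idxOf x) (l.idxOf y) with hlt | heq | hgt
  · exact hlt
  · exact absurd hf (by rw [(idxOf_inj hx).1 heq]; exact lt_irrefl _)
  · exact absurd (forward y hy x hx hgt) hf.not_gt

end List

section SortByKey

variable {α β : Type*} [LinearOrder β] {f : α → β} {l : List α}

def sortByKey (f : α → β) (l : List α) : List α :=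
  l.mergeSort fun a b => decide (f a ≤ f b)

theorem sortByKey_perm (f : α → β) (l : List α) : (sortByKey f l).Perm l :=
  List.mergeSort_perm _ _

theorem pairwise_sortByKey (hf : f.Injective) (hl : l.Nodup) :
    (sortByKey f l).Pairwise (fun a b => f a < f b) := by
  have sorted := List.pairwise_mergeSort (le := fun a b => decide (f a ≤ f b))
    (fun a b c hab hbc => by simp only [decide_eq_true_eq] at *; exact hab.trans hbc)
    (fun a b => by simpa using le_total (f a) (f b)) l
  refine (sorted.and ((sortByKey_perm f l).nodup_iff.2 hl)).imp fun ⟨hle, hne⟩ => ?_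
  exact lt_of_le_of_ne (by simpa using hle) (hf.ne hne)

end SortByKey

theorem invW_sortByKey {β : Type*} [LinearOrder β] {f : ℕ → β} {l : List ℕ}
    (hf : f.Injective) (hl : l.Nodup) :
    InvW (sortByKey f l) = {p | p.1 < p.2 ∧ p.1 ∈ l ∧ p.2 ∈ l ∧ f p.2 < f p.1} := by
  ext ⟨i, j⟩
  simp only [InvW, Set.mem_ofPred_eq, (sortByKey_perm f l).mem_iff]
  refine and_congr_right fun _ => and_congr_right fun hi => and_congr_right fun hj => ?_
  exact List.idxOf_lt_idxOf_iff_of_pairwise (pairwise_sortByKey hf hl)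
    ((sortByKey_perm f l).mem_iff.2 hj) ((sortByKey_perm f l).mem_iff.2 hi)

namespace Nat

variable (p : ℕ → Prop) [DecidablePred p] {i j : ℕ}

theorem count_lt_count_iff_exists : count p i < count p j ↔ ∃ k ∈ Set.Ico i j, p k :=
  ⟨exists_of_count_lt_count, fun ⟨_, ⟨hik, hkj⟩, hk⟩ =>
    (count_monotone p hik).trans_lt (count_strict_mono hk hkj)⟩

theorem sub_count_monotone : Monotone fun n => n - count p n := by
  refine monotone_nat_of_le_succ fun n => ?_
  have := count_le (p := p) (n := n)
  rw [count_succ]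
  split_ifs <;> omega

theorem sub_count_le_sub_count_iff (hij : i ≤ j) :
    j - count p j ≤ i - count p i ↔ ∀ k ∈ Set.Ico i j, p k := by
  obtain ⟨d, rfl⟩ := Nat.exists_eq_add_of_le hij
  have hi := count_le (p := p) (n := i)
  have hd := count_le (p := fun k => p (i + k)) (n := d)
  rw [count_add]
  calc i + d - (count p i + count (fun k => p (i + k)) d) ≤ i - count p i
      ↔ count (fun k => p (i + k)) d = d := by omega
    _ ↔ ∀ k < d, p (i + k) := count_iff_forall
    _ ↔ ∀ k ∈ Set.Ico i (i + d), p k := by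
      refine ⟨fun h k hk => ?_, fun h k hk => h (i + k) ⟨by omega, by omega⟩⟩
      obtain ⟨t, rfl⟩ := Nat.exists_eq_add_of_le hk.1
      exact h t (by have := hk.2; omega)

end Nat

section Keys

open Classical OrderDual

noncomputable def minKey (D : Set ℕ) (k : ℕ) : ℕ ×ₗ ℕᵒᵈ :=
  toLex (k - Nat.count (· ∈ D) k, toDual k)

noncomputable def maxKey (D : Set ℕ) (k : ℕ) : ℕᵒᵈ ×ₗ ℕ :=
  toLex (toDual (Nat.count (· ∈ D) k), k)

variable (D : Set ℕ) {i j : ℕ}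

theorem minKey_injective : (minKey D).Injective := fun a b h => by
  simpa [minKey] using congrArg (fun x => ofDual (ofLex x).2) h

theorem maxKey_injective : (maxKey D).Injective := fun a b h => by
  simpa [maxKey] using congrArg (fun x => (ofLex x).2) h

theorem minKey_lt_minKey_iff (hij : i < j) : minKey D j < minKey D i ↔ Set.Ico i j ⊆ D := by
  have hmono := Nat.sub_count_monotone (· ∈ D) hij.le
  simp only [minKey, Prod.Lex.toLex_lt_toLex, toDual_lt_toDual]
  change _ ↔ ∀ k ∈ Set.Ico i j, k ∈ D
  rw [← Nat.sub_count_le_sub_count_iff (· ∈ D) hij.le]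
  simp only at hmono
  omega

theorem maxKey_lt_maxKey_iff (hij : i < j) :
    maxKey D j < maxKey D i ↔ ∃ k ∈ Set.Ico i j, k ∈ D := by
  rw [maxKey, maxKey, Prod.Lex.toLex_lt_toLex, ← Nat.count_lt_count_iff_exists (· ∈ D)]
  simp only [toDual_lt_toDual]
  omega

end Keys

section Runs

variable {σ : List ℕ} {i j : ℕ}

theorem idxOf_lt_idxOf_of_Ico_subset_desLW (hij : i < j) (h : Set.Ico i j ⊆ DesLW σ) :
    σ.idxOf j < σ.idxOf i := by
  induction hij with
  | refl => exact (h ⟨le_rfl, lt_add_one i⟩).2.2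
  | @step m him ih =>
    have hm : m ∈ DesLW σ := h ⟨(Nat.le_succ i).trans him, lt_add_one m⟩
    exact hm.2.2.trans (ih fun k hk => h ⟨hk.1, by have := hk.2; omega⟩)

theorem exists_mem_Ico_desLW_of_idxOf_lt (hij : i ≤ j) (hσ : ∀ k ∈ Set.Icc i j, k ∈ σ)
    (h : σ.idxOf j < σ.idxOf i) : ∃ k ∈ Set.Ico i j, k ∈ DesLW σ := by
  by_contra! hasc
  refine h.not_ge ?_
  clear h
  induction hij with
  | refl => exact le_rfl
  | @step m him ih =>
    have hm : m ∉ DesLW σ := hasc m ⟨him, lt_add_one m⟩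
    have hmem : ∀ k ∈ Set.Icc i m, k ∈ σ := fun k hk =>
      hσ k ⟨hk.1, by have := hk.2; omega⟩
    refine (ih hmem fun k hk => hasc k ⟨hk.1, by have := hk.2; omega⟩).trans ?_
    by_contra! hdes
    exact hm ⟨hmem m ⟨him, le_rfl⟩, hσ (m + 1) ⟨Nat.le_succ_of_le him, le_rfl⟩, hdes⟩

theorem IsPermWord.mem_of_mem_Icc {n : ℕ} (hσ : IsPermWord n σ) (hi : i ∈ σ) (hj : j ∈ σ)
    {k : ℕ} (hk : k ∈ Set.Icc i j) : k ∈ σ := by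
  rw [hσ.mem_iff, List.mem_range'_1] at hi hj ⊢
  have := hk.1; have := hk.2
  omega

end Runs

noncomputable def minWord (n : ℕ) (D : Set ℕ) : List ℕ :=
  sortByKey (minKey D) (List.range' 1 n)

noncomputable def maxWord (n : ℕ) (D : Set ℕ) : List ℕ :=
  sortByKey (maxKey D) (List.range' 1 n)

section Words

variable {n : ℕ} {D : Set ℕ}

theorem invW_minWord : InvW (minWord n D) = {p | p.1 < p.2 ∧ p.1 ∈ List.range' 1 n ∧
    p.2 ∈ List.range' 1 n ∧ Set.Ico p.1 p.2 ⊆ D} := by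
  rw [minWord, invW_sortByKey (minKey_injective D) List.nodup_range']
  ext ⟨i, j⟩
  exact and_congr_right fun hij => and_congr_right fun _ => and_congr_right fun _ =>
    minKey_lt_minKey_iff D hij

theorem invW_maxWord : InvW (maxWord n D) = {p | p.1 < p.2 ∧ p.1 ∈ List.range' 1 n ∧
    p.2 ∈ List.range' 1 n ∧ ∃ k ∈ Set.Ico p.1 p.2, k ∈ D} := by
  rw [maxWord, invW_sortByKey (maxKey_injective D) List.nodup_range']
  ext ⟨i, j⟩
  exact and_congr_right fun hij => and_congr_right fun _ => and_congr_right fun _ =>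
    maxKey_lt_maxKey_iff D hij

theorem mem_desLW_iff_mem_invW {u : List ℕ} {i : ℕ} : i ∈ DesLW u ↔ (i, i + 1) ∈ InvW u :=
  ⟨fun h => ⟨lt_add_one i, h⟩, fun h => h.2⟩

theorem desLW_subset_desLW {u w : List ℕ} (h : InvW u ⊆ InvW w) : DesLW u ⊆ DesLW w :=
  fun _ hi => mem_desLW_iff_mem_invW.2 (h (mem_desLW_iff_mem_invW.1 hi))

theorem mem_range'_and_succ_mem_range' {i : ℕ} (hi : i ∈ Set.Icc 1 (n - 1)) :
    i ∈ List.range' 1 n ∧ i + 1 ∈ List.range' 1 n := by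
  simp only [Set.mem_Icc, List.mem_range'_1] at hi ⊢
  omega

theorem desLW_minWord (hD : D ⊆ Set.Icc 1 (n - 1)) : DesLW (minWord n D) = D := by
  ext i
  rw [mem_desLW_iff_mem_invW, invW_minWord, Set.mem_ofPred_eq,
    Set.Ico_eq_singleton_left_iff.2 (Order.covBy_add_one i), Set.singleton_subset_iff]
  refine ⟨fun h => h.2.2.2, fun h => ?_⟩
  obtain ⟨hi, hi'⟩ := mem_range'_and_succ_mem_range' (hD h)
  exact ⟨lt_add_one i, hi, hi', h⟩

theorem desLW_maxWord (hD : D ⊆ Set.Icc 1 (n - 1)) : DesLW (maxWord n D) = D := by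
  ext i
  rw [mem_desLW_iff_mem_invW, invW_maxWord, Set.mem_ofPred_eq,
    Set.Ico_eq_singleton_left_iff.2 (Order.covBy_add_one i)]
  simp only [Set.mem_singleton_iff, exists_eq_left]
  refine ⟨fun h => h.2.2.2, fun h => ?_⟩
  obtain ⟨hi, hi'⟩ := mem_range'_and_succ_mem_range' (hD h)
  exact ⟨lt_add_one i, hi, hi', h⟩

end Words

/-- For every `D ⊆ [n-1]`, the descent class
`{σ ∈ Sₙ : Des_L(σ) = D}` is an interval in the right weak Bruhat order: it has a
minimum `m` and a maximum `M`, and it equals `{σ : m ≤ σ ≤ M}` in the weak order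
(`u ≤ w` iff `Inv_L(u) ⊆ Inv_L(w)`). -/
theorem descent_class_is_weak_order_interval (n : ℕ) (D : Set ℕ)
    (hD : D ⊆ Set.Icc 1 (n - 1)) :
    ∃ m M : List ℕ, IsPermWord n m ∧ IsPermWord n M ∧ DesLW m = D ∧ DesLW M = D ∧
      ∀ σ : List ℕ, IsPermWord n σ →
        (DesLW σ = D ↔ InvW m ⊆ InvW σ ∧ InvW σ ⊆ InvW M) := by
  refine ⟨minWord n D, maxWord n D, sortByKey_perm _ _, sortByKey_perm _ _, desLW_minWord hD,
    desLW_maxWord hD, fun σ hσ => ⟨fun hdes => ⟨?_, ?_⟩, fun ⟨hmin, hmax⟩ => ?_⟩⟩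
  · rw [invW_minWord]
    rintro ⟨i, j⟩ ⟨hij, hi, hj, hrun⟩
    exact ⟨hij, hσ.mem_iff.2 hi, hσ.mem_iff.2 hj,
      idxOf_lt_idxOf_of_Ico_subset_desLW hij (hdes ▸ hrun)⟩
  · rw [invW_maxWord]
    rintro ⟨i, j⟩ ⟨hij, hi, hj, hidx⟩
    exact ⟨hij, hσ.mem_iff.1 hi, hσ.mem_iff.1 hj,
      hdes ▸ exists_mem_Ico_desLW_of_idxOf_lt hij.le (fun _ => hσ.mem_of_mem_Icc hi hj) hidx⟩
  · refine (desLW_subset_desLW hmax).trans (desLW_maxWord hD).le |>.antisymm ?_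
    exact (desLW_minWord hD).ge.trans (desLW_subset_desLW hmin)
end

section
/- Let σ ∈ S_k and τ ∈ S_ℓ with n = k + ℓ, let σ/τ be the concatenation of σ with the word τ̄ (obtained by adding k to each letter of τ), and σ\τ the concatenation of τ̄ with σ. Then a permutation ρ ∈ S_n is a shuffle of σ and τ̄ if and only if σ/τ ≤ ρ ≤ σ\τ in the right weak Bruhat order on S_n. -/
/-!
Restricted to a set of letters, a word keeps the relative order of those letters, so the
inversions of the subword of `ρ` on the small letters `≤ k` are the small–small inversions of
`ρ`, and likewise for the large letters. The inversions of `σ/τ` are those of `σ` and of `τ̄`;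
those of `σ\τ` are these together with every (small, large) pair. Hence `σ/τ ≤ ρ ≤ σ\τ` says
exactly that the small–small and large–large inversions of `ρ` are those of `σ` and `τ̄`.
Since a duplicate-free word is determined by its letters and its inversion set, this means
that the two subwords of `ρ` are `σ` and `τ̄`.
-/

open List

namespace List

variable {α : Type*} [DecidableEq α]

theorem Nodup.pairwise_idxOf_lt {u : List α} (hu : u.Nodup) :
    u.Pairwise fun a b => u.idxOf a < u.idxOf b :=
  pairwise_iff_getElem.mpr fun i j hi hj hij => by rwa [hu.idxOf_getElem, hu.idxOf_getElem]

theorem Pairwise.rel_of_idxOf_lt {R : α → α → Prop} {u : List α} (h : u.Pairwise R) {a b : α}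
    (ha : a ∈ u) (hb : b ∈ u) (hab : u.idxOf a < u.idxOf b) : R a b := by
  simpa only [getElem_idxOf] using pairwise_iff_getElem.mp h _ _
    (idxOf_lt_length_iff.mpr ha) (idxOf_lt_length_iff.mpr hb) hab

theorem Sublist.idxOf_lt_idxOf_iff {s u : List α} (h : s <+ u) (hu : u.Nodup) {a b : α}
    (ha : a ∈ s) (hb : b ∈ s) : s.idxOf a < s.idxOf b ↔ u.idxOf a < u.idxOf b := by
  have hmono : ∀ {a b}, a ∈ s → b ∈ s → s.idxOf a < s.idxOf b → u.idxOf a < u.idxOf b :=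
    (hu.pairwise_idxOf_lt.sublist h).rel_of_idxOf_lt
  refine ⟨hmono ha hb, fun hab => ?_⟩
  rcases lt_trichotomy (s.idxOf a) (s.idxOf b) with hlt | heq | hgt
  · exact hlt
  · rw [(idxOf_inj ha).mp heq] at hab
    exact absurd hab (lt_irrefl _)
  · exact absurd (hmono hb ha hgt) hab.not_gt

theorem disjoint_of_forall_lt {β : Type*} [Preorder β] {u v : List β}
    (h : ∀ x ∈ u, ∀ y ∈ v, x < y) : Disjoint u v :=
  fun x hu hv => lt_irrefl x (h x hu x hv)

end List

theorem mem_invW_filter {u : List ℕ} (hu : u.Nodup) (p : ℕ → Bool) {q : ℕ × ℕ} :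
    q ∈ InvW (u.filter p) ↔ q ∈ InvW u ∧ p q.1 ∧ p q.2 := by
  simp only [InvW, Set.mem_ofPred_eq, mem_filter]
  constructor
  · rintro ⟨hlt, ⟨h₁, hp₁⟩, ⟨h₂, hp₂⟩, hidx⟩
    exact ⟨⟨hlt, h₁, h₂, ((filter_sublist).idxOf_lt_idxOf_iff hu
      (mem_filter.mpr ⟨h₂, hp₂⟩) (mem_filter.mpr ⟨h₁, hp₁⟩)).mp hidx⟩, hp₁, hp₂⟩
  · rintro ⟨⟨hlt, h₁, h₂, hidx⟩, hp₁, hp₂⟩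
    exact ⟨hlt, ⟨h₁, hp₁⟩, ⟨h₂, hp₂⟩, ((filter_sublist).idxOf_lt_idxOf_iff hu
      (mem_filter.mpr ⟨h₂, hp₂⟩) (mem_filter.mpr ⟨h₁, hp₁⟩)).mpr hidx⟩

theorem mem_invW_append {u v : List ℕ} (h : Disjoint u v) {q : ℕ × ℕ} :
    q ∈ InvW (u ++ v) ↔ q ∈ InvW u ∨ q ∈ InvW v ∨ (q.1 < q.2 ∧ q.1 ∈ v ∧ q.2 ∈ u) := by
  obtain ⟨i, j⟩ := q
  have hv : ∀ {x}, x ∈ v → (u ++ v).idxOf x = u.length + v.idxOf x :=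
    fun hx => idxOf_append_of_notMem fun hu => h hu hx
  have hu : ∀ {x}, x ∈ u → (u ++ v).idxOf x = u.idxOf x ∧ u.idxOf x < u.length :=
    fun hx => ⟨idxOf_append_of_mem hx, idxOf_lt_length_iff.mpr hx⟩
  simp only [InvW, Set.mem_ofPred_eq, mem_append]
  grind

theorem mem_invW_append_of_forall_lt {u v : List ℕ} (h : ∀ x ∈ u, ∀ y ∈ v, x < y)
    {q : ℕ × ℕ} : q ∈ InvW (u ++ v) ↔ q ∈ InvW u ∨ q ∈ InvW v := by
  rw [mem_invW_append (disjoint_of_forall_lt h)]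
  have hcross : ¬(q.1 < q.2 ∧ q.1 ∈ v ∧ q.2 ∈ u) := fun ⟨hq, h₁, h₂⟩ =>
    lt_asymm hq (h _ h₂ _ h₁)
  simp only [hcross, or_false]

theorem List.Nodup.pairwise_invW {u : List ℕ} (hu : u.Nodup) :
    u.Pairwise fun a b => (a < b → (a, b) ∉ InvW u) ∧ (b < a → (b, a) ∈ InvW u) :=
  hu.pairwise_idxOf_lt.imp_of_mem fun ha hb hab =>
    ⟨fun _ hinv => hinv.2.2.2.not_gt hab, fun hba => ⟨hba, hb, ha, hab⟩⟩

theorem eq_of_perm_of_invW_eq {u v : List ℕ} (huv : u ~ v) (hu : u.Nodup) (h : InvW u = InvW v) :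
    u = v := by
  refine huv.eq_of_pairwise (fun a b _ _ hab hba => ?_) hu.pairwise_invW
    (h ▸ (huv.nodup_iff.mp hu).pairwise_invW)
  rcases lt_trichotomy a b with hlt | heq | hgt
  · exact absurd (hba.2 hlt) (hab.1 hlt)
  · exact heq
  · exact absurd (hab.2 hgt) (hba.1 hgt)

theorem filter_eq_iff_invW {ρ σ : List ℕ} {p : ℕ → Bool} (hρ : ρ.Nodup) (hσ : σ ~ ρ.filter p) :
    ρ.filter p = σ ↔ ∀ q, q ∈ InvW σ ↔ q ∈ InvW ρ ∧ p q.1 ∧ p q.2 := by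
  simp only [← mem_invW_filter hρ]
  refine ⟨fun h q => h ▸ Iff.rfl, fun h => ?_⟩
  exact eq_of_perm_of_invW_eq hσ.symm (hρ.filter p) (Set.ext fun q => (h q).symm)

theorem filter_eq_and_filter_eq_iff_invW_between {ρ σ t : List ℕ} (k : ℕ) (hρ : ρ.Nodup)
    (hσ : σ ~ ρ.filter (fun v => decide (v ≤ k))) (ht : t ~ ρ.filter (fun v => decide (k < v))) :
    (ρ.filter (fun v => decide (v ≤ k)) = σ ∧ ρ.filter (fun v => decide (k < v)) = t) ↔
      (InvW (σ ++ t) ⊆ InvW ρ ∧ InvW ρ ⊆ InvW (t ++ σ)) := by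
  have memσ : ∀ {x}, x ∈ σ ↔ x ∈ ρ ∧ x ≤ k := by simp [hσ.mem_iff]
  have memt : ∀ {x}, x ∈ t ↔ x ∈ ρ ∧ k < x := by simp [ht.mem_iff]
  have hlt : ∀ x ∈ σ, ∀ y ∈ t, x < y := fun x hx y hy => by
    have := (memσ.mp hx).2; have := (memt.mp hy).2; omega
  have mem_σt : ∀ {q}, q ∈ InvW (σ ++ t) ↔ q ∈ InvW σ ∨ q ∈ InvW t :=
    mem_invW_append_of_forall_lt hlt
  have mem_tσ : ∀ {q}, q ∈ InvW (t ++ σ) ↔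
      q ∈ InvW t ∨ q ∈ InvW σ ∨ (q.1 < q.2 ∧ q.1 ∈ σ ∧ q.2 ∈ t) :=
    mem_invW_append (disjoint_of_forall_lt hlt).symm
  rw [filter_eq_iff_invW hρ hσ, filter_eq_iff_invW hρ ht]
  simp only [decide_eq_true_eq]
  constructor
  · rintro ⟨hlow, hhigh⟩
    refine ⟨fun q hq => ?_, fun q hq => ?_⟩
    · rcases mem_σt.mp hq with h | h
      exacts [((hlow q).mp h).1, ((hhigh q).mp h).1]
    · have ⟨hlt, h₁, h₂, _⟩ := hq
      rw [mem_tσ]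
      by_cases hk₂ : q.2 ≤ k
      · exact Or.inr (Or.inl ((hlow q).mpr ⟨hq, by omega, hk₂⟩))
      by_cases hk₁ : k < q.1
      · exact Or.inl ((hhigh q).mpr ⟨hq, hk₁, by omega⟩)
      exact Or.inr (Or.inr ⟨hlt, memσ.mpr ⟨h₁, by omega⟩, memt.mpr ⟨h₂, by omega⟩⟩)
  · rintro ⟨hsub, hsup⟩
    constructor <;> refine fun q => ⟨fun h => ?_, fun ⟨hq, hk₁, hk₂⟩ => ?_⟩
    · exact ⟨hsub (mem_σt.mpr (Or.inl h)), (memσ.mp h.2.1).2, (memσ.mp h.2.2.1).2⟩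
    · rcases mem_tσ.mp (hsup hq) with h | h | ⟨-, -, h⟩
      · exact absurd (memt.mp h.2.1).2 (by omega)
      · exact h
      · exact absurd (memt.mp h).2 (by omega)
    · exact ⟨hsub (mem_σt.mpr (Or.inr h)), (memt.mp h.2.1).2, (memt.mp h.2.2.1).2⟩
    · rcases mem_tσ.mp (hsup hq) with h | h | ⟨-, h, -⟩
      · exact h
      · exact absurd (memσ.mp h.2.1).2 (by omega)
      · exact absurd (memσ.mp h).2 (by omega)

theorem IsPermWord.nodup {n : ℕ} {u : List ℕ} (h : IsPermWord n u) : u.Nodup :=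
  Perm.nodup_iff h |>.mpr nodup_range'

theorem IsPermWord.mem_iff {n x : ℕ} {u : List ℕ} (h : IsPermWord n u) :
    x ∈ u ↔ 1 ≤ x ∧ x ≤ n := by
  rw [Perm.mem_iff h, mem_range'_1]
  omega

/-- Let `σ ∈ S_k`, `τ ∈ S_ℓ`, `n = k + ℓ`, and let `τ̄` be `τ` with `k`
added to each letter. A permutation `ρ ∈ Sₙ` is a shuffle of `σ` and `τ̄` (its subword on
letters `≤ k` is `σ` and its subword on letters `> k` is `τ̄`) if and only if
`σ/τ ≤ ρ ≤ σ\τ` in the right weak Bruhat order, where `σ/τ = σ·τ̄` and `σ\τ = τ̄·σ`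
are the two concatenations. -/
theorem shuffles_are_weak_order_interval (k l : ℕ) (σ τ ρ : List ℕ)
    (hσ : IsPermWord k σ) (hτ : IsPermWord l τ) (hρ : IsPermWord (k + l) ρ) :
    (ρ.filter (fun v => decide (v ≤ k)) = σ ∧
        ρ.filter (fun v => decide (k < v)) = τ.map (· + k)) ↔
      (InvW (σ ++ τ.map (· + k)) ⊆ InvW ρ ∧ InvW ρ ⊆ InvW (τ.map (· + k) ++ σ)) := by
  have mem_shift : ∀ {x}, x ∈ τ.map (· + k) ↔ k < x ∧ x ≤ k + l := by
    intro x
    simp only [mem_map, hτ.mem_iff]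
    exact ⟨fun ⟨y, hy, hyx⟩ => by omega, fun hx => ⟨x - k, by omega, by omega⟩⟩
  refine filter_eq_and_filter_eq_iff_invW_between k hρ.nodup ?_ ?_
  · refine (perm_ext_iff_of_nodup hσ.nodup (hρ.nodup.filter _)).mpr fun x => ?_
    simp only [mem_filter, hσ.mem_iff, hρ.mem_iff, decide_eq_true_eq]
    omega
  · refine (perm_ext_iff_of_nodup (hτ.nodup.map (add_left_injective k))
      (hρ.nodup.filter _)).mpr fun x => ?_
    simp only [mem_filter, mem_shift, hρ.mem_iff, decide_eq_true_eq]
    omega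
end

section
/- If a permutation σ is covered by τ in the right weak Bruhat order on S_n (i.e. τ = σ·s_i with ℓ(τ) = ℓ(σ)+1), then |Des_L(τ) \ Des_L(σ)| ≤ 1. -/
/-!
Swapping adjacent letters `x < y` of a word preserves the relative order of every pair of
letters other than `{x, y}`. A new left descent `i` needs `i + 1` to overtake `i`, so
`{i, i + 1} = {x, y}`, that is, `i = x`.
-/

namespace List

variable {α : Type*} [DecidableEq α]

theorem idxOf_append_cons_cons (l₁ l₂ : List α) (a b z : α) :
    (l₁ ++ a :: b :: l₂).idxOf z =
      if z ∈ l₁ then l₁.idxOf z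
      else if z = a then l₁.length
      else if z = b then l₁.length + 1
      else l₁.length + 2 + l₂.idxOf z := by
  by_cases hz : z ∈ l₁
  · simp [idxOf_append_of_mem hz, hz]
  · rw [idxOf_append_of_notMem hz]
    by_cases hza : z = a
    · subst hza; simp [hz]
    by_cases hzb : z = b
    · subst hzb; simp [hz, hza, idxOf_cons_ne _ (Ne.symm hza)]
    simp [hz, hza, hzb, idxOf_cons_ne _ (Ne.symm hza), idxOf_cons_ne _ (Ne.symm hzb)]
    omega

theorem idxOf_lt_idxOf_swap_iff (l₁ l₂ : List α) {a b p q : α}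
    (hab : ¬(p = a ∧ q = b)) (hba : ¬(p = b ∧ q = a)) :
    (l₁ ++ b :: a :: l₂).idxOf p < (l₁ ++ b :: a :: l₂).idxOf q ↔
      (l₁ ++ a :: b :: l₂).idxOf p < (l₁ ++ a :: b :: l₂).idxOf q := by
  have hp := idxOf_lt_length_of_mem (l := l₁) (a := p)
  have hq := idxOf_lt_length_of_mem (l := l₁) (a := q)
  simp only [idxOf_append_cons_cons]
  split_ifs <;> grind

end List

theorem desLW_append_swap_diff_subset_singleton (l₁ l₂ : List ℕ) {x y : ℕ} (hxy : x < y) :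
    DesLW (l₁ ++ y :: x :: l₂) \ DesLW (l₁ ++ x :: y :: l₂) ⊆ {x} := by
  rintro i ⟨⟨hi, hi1, hdes⟩, hnot⟩
  rw [Set.mem_singleton_iff]
  by_contra hix
  have hperm : (l₁ ++ y :: x :: l₂).Perm (l₁ ++ x :: y :: l₂) := .append_left l₁ (.swap x y l₂)
  exact hnot ⟨hperm.subset hi, hperm.subset hi1,
    (List.idxOf_lt_idxOf_swap_iff l₁ l₂ (by omega) (by omega)).1 hdes⟩

theorem cover_adds_at_most_one_descent_general (σ τ : List ℕ)
    (hcov : WeakCovW σ τ) :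
    (DesLW τ \ DesLW σ).ncard ≤ 1 := by
  obtain ⟨l₁, l₂, x, y, hxy, rfl, rfl⟩ := hcov
  exact (Set.ncard_le_ncard (desLW_append_swap_diff_subset_singleton l₁ l₂ hxy)).trans
    (Set.ncard_singleton x).le

/-- If `σ` is covered by `τ` in the right weak Bruhat order on `Sₙ`
(`τ = σ·sᵢ` with `σ(i) < σ(i+1)`), then `|Des_L(τ) \ Des_L(σ)| ≤ 1`. -/
theorem cover_adds_at_most_one_descent (n : ℕ) (σ τ : List ℕ)
    (hσ : IsPermWord n σ) (hτ : IsPermWord n τ)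
    (hcov : WeakCovW σ τ) :
    (DesLW τ \ DesLW σ).ncard ≤ 1 :=
  cover_adds_at_most_one_descent_general σ τ hcov
end
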